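/- Let 𝕜 be a field of characteristic zero, let k ≥ 2, and set v₁ = (1,0), v₂ = (0,1), v₃ = (x₁,x₂) ∈ 𝕜². Suppose H₁, H₂, H₃ are k×(k+1) matrices over 𝕜 satisfying the square relations (k−1) • (H_i·F_k(v_j)) = k • (F_{k−1}(v_j)·G_k(v_i)) − F_{k−1}(v_i)·G_k(v_j) for all i, j ∈ {1,2,3}. Then H_i = G_{k+1}(v_i) for i = 1, 2, 3. (This is Step 2 of the induction step in the proof of Theorem 4.2: the square relations of Theorem 3.12 with the standard F- and G-matrices force the g-type matrices G_i^{(n−1)} at the corner vertex to take the standard form (4.2).) -/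

import Mathlib

/-!
The standard matrices satisfy the square relations: in the monomial bases, `F_k(a, b)` is
multiplication by `a x + b y` and `G_k(a, b)` is the derivation `a ∂_y - b ∂_x`, and the relation
is the Leibniz rule combined with Euler's identity for homogeneous polynomials; here it is checked
entrywise. Since `k - 1 ≠ 0` in characteristic zero, the relations for `j = 1, 2` then give
`H_i F_k(1, 0) = G_{k+1}(v_i) F_k(1, 0)` and `H_i F_k(0, 1) = G_{k+1}(v_i) F_k(0, 1)`, and right
multiplication by `F_k(1, 0)` and `F_k(0, 1)` reads off all columns but the last, resp. all but
the first.
-/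

/-- The `(k+1) × k` matrix `F_k(a,b)` of equation (4.1): (1-indexed) entry `(i,j)` is
`a` if `i = j`, `b` if `i = j+1`, and `0` otherwise. -/
def Fmat (R : Type*) [CommRing R] (k : ℕ) (a b : R) : Matrix (Fin (k + 1)) (Fin k) R :=
  Matrix.of fun i j =>
    if (i : ℕ) = (j : ℕ) then a else if (i : ℕ) = (j : ℕ) + 1 then b else 0

/-- The `(k−1) × k` matrix `G_k(a,b)` of equation (4.2): (1-indexed) entry `(i,i)` is
`−(k−i)·b`, entry `(i,i+1)` is `i·a`, other entries are `0`. -/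
def Gmat (R : Type*) [CommRing R] (k : ℕ) (a b : R) : Matrix (Fin (k - 1)) (Fin k) R :=
  Matrix.of fun i j =>
    if (j : ℕ) = (i : ℕ) then -((k - 1 - (i : ℕ) : ℕ) : R) * b
    else if (j : ℕ) = (i : ℕ) + 1 then (((i : ℕ) + 1 : ℕ) : R) * a
    else 0

section
variable {R : Type*} [CommRing R]

lemma Fin.sum_ite_shift_mul (N p : ℕ) (c d : R) (B : ℕ → R) :
    ∑ m : Fin N, (if p = m then c else if p = m + 1 then d else 0) * B m =
      (if p < N then c * B p else 0) + (if 0 < p ∧ p ≤ N then d * B (p - 1) else 0) := by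
  rw [Fin.sum_univ_eq_sum_range (fun m => (if p = m then c else if p = m + 1 then d else 0) * B m)]
  induction N with
  | zero => rw [Finset.sum_range_zero, if_neg p.not_lt_zero, if_neg (by omega), add_zero]
  | succ N ih =>
    rw [Finset.sum_range_succ, ih]
    split_ifs <;> subst_vars <;> first | omega | ring1 | simp

lemma mul_Fmat_apply {l : Type*} {n : ℕ} (M : Matrix l (Fin (n + 1)) R) (a b : R) (p : l)
    (q : Fin n) : (M * Fmat R n a b) p q = M p q.castSucc * a + M p q.succ * b := by
  rw [Matrix.mul_apply, Fintype.sum_eq_add q.castSucc q.succ Fin.castSucc_lt_succ.ne]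
  · simp [Fmat]
  · rintro m ⟨h₁, h₂⟩
    simp only [ne_eq, Fin.ext_iff, Fin.val_castSucc, Fin.val_succ] at h₁ h₂
    simp [Fmat, h₁, h₂]

lemma eq_of_mul_Fmat_eq {l : Type*} {k : ℕ} (hk : 1 ≤ k) {M N : Matrix l (Fin (k + 1)) R}
    (h₁ : M * Fmat R k 1 0 = N * Fmat R k 1 0) (h₂ : M * Fmat R k 0 1 = N * Fmat R k 0 1) :
    M = N := by
  ext p j
  induction j using Fin.cases with
  | zero => simpa [mul_Fmat_apply] using congrFun₂ h₁ p ⟨0, hk⟩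
  | succ i => simpa [mul_Fmat_apply] using congrFun₂ h₂ p i

/- In this proof and the next, writing `k = P + r + 1` with `P` the row index and splitting
`P` and `r` into zero and successor removes every truncated subtraction, so that each case of
the entry formulas is a ring identity. -/
lemma Fmat_mul_Gmat_apply (k : ℕ) (a b c d : R) (p : Fin (k - 1 + 1)) (q : Fin k) :
    (Fmat R (k - 1) c d * Gmat R k a b) p q =
      if (q : ℕ) = p then ((p : ℕ) : R) * a * d - ((k - 1 - p : ℕ) : R) * b * c
      else if (q : ℕ) = p + 1 then ((p + 1 : ℕ) : R) * a * c
      else if (q : ℕ) + 1 = p then -((k - p : ℕ) : R) * b * d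
      else 0 := by
  simp only [Matrix.mul_apply, Fmat, Gmat, Matrix.of_apply]
  rw [Fin.sum_ite_shift_mul (B := fun m => if (q : ℕ) = m then -((k - 1 - m : ℕ) : R) * b
    else if (q : ℕ) = m + 1 then ((m + 1 : ℕ) : R) * a else 0)]
  have hq := q.isLt
  have hp := p.isLt
  generalize (p : ℕ) = P at *
  generalize (q : ℕ) = Q at *
  obtain ⟨r, rfl⟩ : ∃ r, k = P + r + 1 := ⟨k - P - 1, by omega⟩
  rcases P with _ | P <;> rcases r with _ | r <;> split_ifs <;> first
    | omega
    | contradiction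
    | ring1
    | (simp (disch := omega) only [Nat.cast_sub, Nat.cast_add, Nat.cast_one, Nat.cast_zero]
       ring1)

lemma Gmat_square_relation (k : ℕ) (hk : 1 ≤ k) (a b c d : R) :
    (k - 1) • ((Gmat R (k + 1) a b).submatrix (Fin.cast (Nat.add_sub_cancel k 1).symm) id
        * Fmat R k c d) =
      (k • (Fmat R (k - 1) c d * Gmat R k a b) - Fmat R (k - 1) a b * Gmat R k c d).submatrix
        (Fin.cast (Nat.sub_add_cancel hk).symm) id := by
  ext p q
  simp only [Matrix.smul_apply, Matrix.submatrix_apply, Matrix.sub_apply, id_eq, mul_Fmat_apply,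
    Fmat_mul_Gmat_apply, nsmul_eq_mul]
  simp only [Gmat, Matrix.of_apply, Fin.val_cast, Fin.val_castSucc, Fin.val_succ]
  have hq := q.isLt
  have hp := p.isLt
  generalize (p : ℕ) = P at *
  generalize (q : ℕ) = Q at *
  obtain ⟨r, rfl⟩ : ∃ r, k = P + r + 1 := ⟨k - P - 1, by omega⟩
  rcases P with _ | P <;> rcases r with _ | r <;> split_ifs <;> first
    | omega
    | contradiction
    | (simp (disch := omega) only [Nat.cast_sub, Nat.cast_add, Nat.cast_one, Nat.cast_zero]
       ring1)

end

theorem stmt8 {𝕜 : Type*} [Field 𝕜] [CharZero 𝕜] (k : ℕ) (hk : 2 ≤ k)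
    (v : Fin 3 → 𝕜 × 𝕜)
    (hv1 : v 0 = (1, 0)) (hv2 : v 1 = (0, 1))
    (H : Fin 3 → Matrix (Fin k) (Fin (k + 1)) 𝕜)
    (hrel : ∀ i j : Fin 3,
      (k - 1) • (H i * Fmat 𝕜 k (v j).1 (v j).2) =
        (k • (Fmat 𝕜 (k - 1) (v j).1 (v j).2 * Gmat 𝕜 k (v i).1 (v i).2)
            - Fmat 𝕜 (k - 1) (v i).1 (v i).2 * Gmat 𝕜 k (v j).1 (v j).2).submatrix
          (Fin.cast (by omega : k = k - 1 + 1)) id) :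
    ∀ i : Fin 3,
      H i = (Gmat 𝕜 (k + 1) (v i).1 (v i).2).submatrix
        (Fin.cast (by omega : k = k + 1 - 1)) id := by
  intro i
  have hmul : ∀ j, H i * Fmat 𝕜 k (v j).1 (v j).2 =
      (Gmat 𝕜 (k + 1) (v i).1 (v i).2).submatrix (Fin.cast (by omega)) id *
        Fmat 𝕜 k (v j).1 (v j).2 := by
    intro j
    ext p q
    refine (nsmul_right_inj (by omega : k - 1 ≠ 0)).1 ?_
    exact congrFun₂ ((hrel i j).trans (Gmat_square_relation k (by omega) _ _ _ _).symm) p q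
  apply eq_of_mul_Fmat_eq (by omega)
  · simpa [hv1] using hmul 0
  · simpa [hv2] using hmul 1
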